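/- arXiv:2202.03817 — 2 statements merged into one kernel-verified Lean document; each statement's English description precedes it below -/
import Mathlib

section
/- Let p be an odd prime, n a positive even integer, s | n, and let F : F_{p^n} → F_{p^s} be a vectorial dual-bent function with F(0) = 0, F(−x) = F(x) for all x, and such that every component function F_c is weakly regular bent with the same sign ε_{F_c} = ε ∈ {±1} for all c ∈ F_{p^s}^*. Then, with D_i = {x ∈ F_{p^n} : F(x) = i}, one has |D_0| = p^{n−s} + ε(p^s − 1)p^{n/2 − s} and |D_i| = p^{n−s} − ε p^{n/2 − s} for every i ∈ F_{p^s}^*. -/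
/-!
Each component `F_c` is even with `F_c(0) = 0`, so `x ↦ -x` pairs up the points of each
level set of `F_c` except `0`: the level set of `0` has odd size, all others even size.
Writing `W_{F_c}(0) = ∑_j N_j ζ^j = ε p^{n/2} ζ^t`, the only `ℚ`-linear relations among
`1, ζ, …, ζ^{p-1}` have all coefficients equal, so `t ≠ 0` would force `N_0 = N_{-t}`, against
parity. Hence `W_{F_c}(0) = ε p^{n/2}` for every `c ≠ 0`, and the fibre sizes follow from the
orthogonality relation `p^s |D_i| = ∑_c ∑_x ζ^{Tr(c (F(x) - i))}`.
-/

open scoped BigOperators Pointwise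

noncomputable section

/-- The standard additive character `x ↦ ζ_p^x` of `ZMod p` into `ℂ`. -/
def ep (p : ℕ) (x : ZMod p) : ℂ :=
  Complex.exp (2 * Real.pi * Complex.I * (x.val : ℂ) / (p : ℂ))

/-- The Walsh transform of `f : V → ZMod p`, with the inner product `⟨a, x⟩ = Tr(a * x)`. -/
def walsh (p : ℕ) {V : Type*} [CommRing V] [Fintype V] [Algebra (ZMod p) V]
    (f : V → ZMod p) (a : V) : ℂ :=
  ∑ x : V, ep p (f x - (Algebra.trace (ZMod p) V) (a * x))

/-- `f` is bent: `|W_f(a)| = √(card V)` for all `a`. -/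
def IsBent (p : ℕ) {V : Type*} [CommRing V] [Fintype V] [Algebra (ZMod p) V]
    (f : V → ZMod p) : Prop :=
  ∀ a : V, ‖walsh p f a‖ = Real.sqrt (Fintype.card V)

/-- The component function `F_c = Tr^s_1(c ⬝ F(·))` of a vectorial function. -/
def comp (p : ℕ) {V K : Type*} [CommRing K] [Algebra (ZMod p) K]
    (F : V → K) (c : K) : V → ZMod p :=
  fun x => (Algebra.trace (ZMod p) K) (c * F x)

/-- `D` is a `(v, k, λ, μ)` partial difference set in the additive group `G`. -/
def IsPDS {G : Type*} [AddGroup G] (D : Set G) (v k lam mu : ℚ) : Prop :=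
  (Nat.card G : ℚ) = v ∧ (Nat.card D : ℚ) = k ∧
  ∀ g : G, g ≠ 0 →
    (g ∈ D → (Nat.card {xy : D × D // (xy.1 : G) - (xy.2 : G) = g} : ℚ) = lam) ∧
    (g ∉ D → (Nat.card {xy : D × D // (xy.1 : G) - (xy.2 : G) = g} : ℚ) = mu)

section Character

variable {p : ℕ}

lemma ep_eq_pow (x : ZMod p) : ep p x = Complex.exp (2 * Real.pi * Complex.I / p) ^ x.val := by
  rw [← Complex.exp_nat_mul, ep]
  ring_nf

lemma ep_eq_stdAddChar [NeZero p] (x : ZMod p) : ep p x = ZMod.stdAddChar x := by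
  rw [ZMod.stdAddChar_apply, ZMod.toCircle_apply, ep]

lemma ep_zero [NeZero p] : ep p 0 = 1 := by
  rw [ep_eq_stdAddChar, AddChar.map_zero_eq_one]

lemma ep_add [NeZero p] (a b : ZMod p) : ep p (a + b) = ep p a * ep p b := by
  simp only [ep_eq_stdAddChar, AddChar.map_add_eq_mul]

lemma walsh_zero {V : Type*} [CommRing V] [Fintype V] [Algebra (ZMod p) V] (f : V → ZMod p) :
    walsh p f 0 = ∑ x, ep p (f x) := by
  simp [walsh]

open Polynomial in
theorem eq_of_sum_mul_ep_eq_zero [Fact p.Prime] {a : ZMod p → ℚ}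
    (h : ∑ j, (a j : ℂ) * ep p j = 0) (j k : ZMod p) : a j = a k := by
  set ζ : ℂ := Complex.exp (2 * Real.pi * Complex.I / p)
  have hζ : IsPrimitiveRoot ζ p := Complex.isPrimitiveRoot_exp p (Fact.out : p.Prime).ne_zero
  let P : ℚ[X] := ∑ j : ZMod p, C (a j) * X ^ j.val
  have hcoeff (j : ZMod p) : P.coeff j.val = a j := by
    simp [P, finsetSum_coeff, (ZMod.val_injective p).eq_iff]
  have hroot : aeval ζ P = 0 := by simpa [P, ep_eq_pow] using h
  -- `P` has degree `< p` and is divisible by `Φ_p = 1 + X + ⋯ + X^(p-1)`, the minimal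
  -- polynomial of `ζ`, so it is a constant multiple of `Φ_p`.
  obtain ⟨Q, hQ⟩ : cyclotomic p ℚ ∣ P := by
    rw [cyclotomic_eq_minpoly_rat hζ (Fact.out : p.Prime).pos]
    exact minpoly.dvd ℚ ζ hroot
  have hdegP : P.natDegree ≤ p - 1 :=
    natDegree_sum_le_of_forall_le _ _ fun j _ =>
      (natDegree_C_mul_X_pow_le _ _).trans (by have := ZMod.val_lt j; omega)
  have hQ0 : Q.natDegree = 0 := by
    rcases eq_or_ne Q 0 with rfl | hQ0
    · simp
    have := natDegree_mul (cyclotomic_ne_zero p ℚ) hQ0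
    rw [← hQ, natDegree_cyclotomic, Nat.totient_prime Fact.out] at this
    omega
  have hconst (j : ZMod p) : a j = Q.coeff 0 := by
    rw [← hcoeff, hQ, eq_C_of_natDegree_eq_zero hQ0, coeff_mul_C, cyclotomic_prime,
      finsetSum_coeff]
    simp [coeff_X_pow, ZMod.val_lt j]
  rw [hconst j, hconst k]

lemma neg_eq_self_iff_of_odd {R : Type*} [Ring R] [NoZeroDivisors R] [Nontrivial R] [CharP R p]
    (hp : Odd p) {a : R} : -a = a ↔ a = 0 :=
  Ring.eq_self_iff_eq_zero_of_char_ne_two <| by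
    rw [ringChar.eq R p]
    rintro rfl
    exact absurd hp (by decide)

end Character

open Finset

section Parity

variable {V β : Type*} [AddGroup V] [DecidableEq β]

lemma even_card_of_neg_mem (hV : ∀ x : V, -x = x → x = 0) {S : Finset V}
    (hS : ∀ x ∈ S, -x ∈ S) (h0 : (0 : V) ∉ S) : Even #S := by
  rw [← ZMod.natCast_eq_zero_iff_even, Finset.cast_card]
  refine sum_involution (fun x _ => -x) (fun _ _ => by decide) (fun x hx _ hneg => ?_) hS
    (fun x _ => neg_neg x)
  exact h0 (hV x hneg ▸ hx)

variable [Fintype V] {f : V → β}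

lemma even_card_fiber_of_ne (hV : ∀ x : V, -x = x → x = 0) (hf : ∀ x, f (-x) = f x)
    {b : β} (hb : b ≠ f 0) : Even #{x | f x = b} :=
  even_card_of_neg_mem hV (by simp [hf]) (by simpa using hb.symm)

lemma odd_card_fiber_zero [DecidableEq V] (hV : ∀ x : V, -x = x → x = 0)
    (hf : ∀ x, f (-x) = f x) : Odd #{x | f x = f 0} := by
  have hmem : (0 : V) ∈ ({x | f x = f 0} : Finset V) := by simp
  rw [← card_erase_add_one hmem]
  refine (even_card_of_neg_mem hV (fun x hx => ?_) (notMem_erase _ _)).add_one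
  simp_all

end Parity

variable {p : ℕ} [Fact p.Prime]

lemma sum_ep_eq_sum_card_fiber {V : Type*} [Fintype V] (f : V → ZMod p) :
    ∑ x, ep p (f x) = ∑ j, (#{x | f x = j} : ℂ) * ep p j := by
  rw [← sum_fiberwise univ f]
  refine sum_congr rfl fun j _ => ?_
  rw [sum_congr rfl fun x hx => by rw [(mem_filter.1 hx).2], sum_const, nsmul_eq_mul]

theorem eq_zero_of_sum_ep_eq_mul_ep {V : Type*} [AddGroup V] [Fintype V] [DecidableEq V]
    (hp : Odd p) (hV : ∀ x : V, -x = x → x = 0) {f : V → ZMod p} (hf : ∀ x, f (-x) = f x)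
    (hf0 : f 0 = 0) {z : ℚ} {t : ZMod p} (h : ∑ x, ep p (f x) = z * ep p t) : t = 0 := by
  by_contra ht
  let N : ZMod p → ℚ := fun j => #{x | f x = j}
  have hrel : ∑ j, ((N j - if j = t then z else 0 : ℚ) : ℂ) * ep p j = 0 := by
    simp only [N, Rat.cast_sub, Rat.cast_natCast, sub_mul, sum_sub_distrib,
      ← sum_ep_eq_sum_card_fiber, h, apply_ite (Rat.cast : ℚ → ℂ), Rat.cast_zero, ite_mul,
      zero_mul, sum_ite_eq', mem_univ, if_true, sub_self]
  have htt : -t ≠ t := mt (neg_eq_self_iff_of_odd hp).1 ht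
  have hN : #{x | f x = 0} = #{x | f x = -t} := by
    simpa [N, Ne.symm ht, htt] using eq_of_sum_mul_ep_eq_zero hrel 0 (-t)
  have hodd : Odd #{x | f x = 0} := hf0 ▸ odd_card_fiber_zero hV hf
  have heven : Even #{x | f x = -t} := even_card_fiber_of_ne hV hf (by simpa [hf0] using ht)
  rw [hN] at hodd
  exact Nat.not_even_iff_odd.2 hodd heven

section Trace

variable {K : Type*} [Field K] [Fintype K] [DecidableEq K] [Algebra (ZMod p) K]

lemma sum_ep_trace_mul (y : K) :
    ∑ c : K, ep p (Algebra.trace (ZMod p) K (c * y)) =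
      if y = 0 then (Fintype.card K : ℂ) else 0 := by
  let ψ : AddChar K ℂ :=
    ZMod.stdAddChar.compAddMonoidHom (Algebra.trace (ZMod p) K).toAddMonoidHom
  have hψ : ψ ≠ 1 := by
    obtain ⟨a, ha⟩ := Algebra.trace_surjective (ZMod p) K 1
    refine AddChar.ne_one_iff.2 ⟨a, fun h => one_ne_zero (?_ : (1 : ZMod p) = 0)⟩
    rw [← ha]
    exact ZMod.injective_stdAddChar (h.trans (AddChar.map_zero_eq_one _).symm)
  simpa [ψ, ep_eq_stdAddChar] using AddChar.sum_mulShift y (AddChar.IsPrimitive.of_ne_one hψ)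

theorem card_fiber_mul_card_eq {V : Type*} [Fintype V] (F : V → K) {w : ℂ}
    (hw : ∀ c : K, c ≠ 0 → ∑ x, ep p (comp p F c x) = w) (i : K) :
    (Nat.card {x // F x = i} : ℂ) * Fintype.card K
      = Fintype.card V - w + if i = 0 then w * Fintype.card K else 0 := by
  have hsum (c : K) :
      ∑ x, ep p (comp p F c x) = w + if c = 0 then Fintype.card V - w else 0 := by
    split_ifs with hc
    · simp [hc, comp, ep_zero]
    · simp [hw c hc]
  calc (Nat.card {x // F x = i} : ℂ) * Fintype.card K
      = ∑ x, ∑ c : K, ep p (Algebra.trace (ZMod p) K (c * (F x - i))) := by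
        simp [sum_ep_trace_mul, sub_eq_zero, Fintype.card_subtype, sum_ite]
    _ = ∑ c : K, ep p (Algebra.trace (ZMod p) K (c * -i)) * ∑ x, ep p (comp p F c x) := by
        rw [sum_comm]
        simp_rw [mul_sum, ← ep_add, comp, ← map_add, ← mul_add, sub_eq_add_neg, add_comm]
    _ = _ := by
        simp only [hsum, mul_add, sum_add_distrib, ← sum_mul, sum_ep_trace_mul, neg_eq_zero,
          mul_ite, mul_zero, sum_ite_eq', mem_univ, if_true, zero_mul, map_zero, ep_zero]
        split_ifs <;> ring

end Trace

theorem statement2_general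
    (p n s : ℕ) [Fact p.Prime] (hp : Odd p)
    (Fn Fs : Type) [Field Fn] [Fintype Fn] [Field Fs] [Fintype Fs]
    [Algebra (ZMod p) Fn] [Algebra (ZMod p) Fs]
    (hcardn : Fintype.card Fn = p ^ n) (hcards : Fintype.card Fs = p ^ s)
    (F Fstar : Fn → Fs) (σ : Equiv.Perm Fsˣ)
    (ε : ℤ)
    (hF0 : F 0 = 0) (hFsym : ∀ x : Fn, F (-x) = F x)
    -- every component `F_c` is weakly regular bent with sign `ε` and dual `(F^*)_{σ(c)}`
    (hdual : ∀ (c : Fsˣ) (a : Fn),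
      walsh p (comp p F (c : Fs)) a
        = (ε : ℂ) * (p : ℂ) ^ (n / 2) * ep p (comp p Fstar ((σ c : Fsˣ) : Fs) a)) :
    (Nat.card {x : Fn // F x = 0} : ℚ)
        = (p : ℚ) ^ ((n : ℤ) - (s : ℤ))
          + (ε : ℚ) * ((p : ℚ) ^ (s : ℤ) - 1) * (p : ℚ) ^ (((n / 2 : ℕ) : ℤ) - (s : ℤ))
    ∧ ∀ i : Fs, i ≠ 0 →
      (Nat.card {x : Fn // F x = i} : ℚ)
        = (p : ℚ) ^ ((n : ℤ) - (s : ℤ))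
          - (ε : ℚ) * (p : ℚ) ^ (((n / 2 : ℕ) : ℤ) - (s : ℤ)) := by
  classical
  have : CharP Fn p := charP_of_injective_algebraMap' (ZMod p) p
  have hW (c : Fs) (hc : c ≠ 0) : ∑ x, ep p (comp p F c x) = (ε : ℂ) * (p : ℂ) ^ (n / 2) := by
    have h := hdual (Units.mk0 c hc) 0
    rw [walsh_zero, Units.val_mk0] at h
    have ht := eq_zero_of_sum_ep_eq_mul_ep hp (fun x => (neg_eq_self_iff_of_odd hp).1)
      (f := comp p F c) (by simp [comp, hFsym]) (by simp [comp, hF0]) (z := ε * p ^ (n / 2))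
      (by rw [h]; push_cast; rfl)
    rw [h, ht, ep_zero, mul_one]
  have hcount (i : Fs) : (Nat.card {x // F x = i} : ℚ) * p ^ s
      = p ^ n - ε * p ^ (n / 2) + if i = 0 then (ε : ℚ) * p ^ (n / 2) * p ^ s else 0 := by
    have h := card_fiber_mul_card_eq F hW i
    rw [hcardn, hcards] at h
    split_ifs at h ⊢ <;> exact_mod_cast h
  have hpQ : (p : ℚ) ≠ 0 := by exact_mod_cast (Fact.out : p.Prime).ne_zero
  simp only [zpow_sub₀ hpQ, zpow_natCast]
  refine ⟨?_, fun i hi => ?_⟩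
  · have h := hcount 0
    rw [if_pos rfl] at h
    field_simp
    linear_combination h
  · have h := hcount i
    rw [if_neg hi] at h
    field_simp
    linear_combination h

/-- fiber sizes of a vectorial dual-bent function `F : F_{p^n} → F_{p^s}`
with `F(0) = 0`, `F(-x) = F(x)`, all of whose component functions are weakly regular bent
with the same sign `ε`. -/
theorem statement2
    (p n s : ℕ) [Fact p.Prime] (hp : Odd p) (hn : 0 < n) (hs : 0 < s)
    (hneven : Even n) (hsn : s ∣ n)
    (Fn Fs : Type) [Field Fn] [Fintype Fn] [Field Fs] [Fintype Fs]
    [Algebra (ZMod p) Fn] [Algebra (ZMod p) Fs]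
    (hcardn : Fintype.card Fn = p ^ n) (hcards : Fintype.card Fs = p ^ s)
    (F Fstar : Fn → Fs) (σ : Equiv.Perm Fsˣ)
    (ε : ℤ) (hε : ε = 1 ∨ ε = -1)
    (hF0 : F 0 = 0) (hFsym : ∀ x : Fn, F (-x) = F x)
    -- `F^*` is vectorial bent
    (hFstarBent : ∀ c : Fsˣ, IsBent p (comp p Fstar (c : Fs)))
    -- every component `F_c` is weakly regular bent with sign `ε` and dual `(F^*)_{σ(c)}`
    (hdual : ∀ (c : Fsˣ) (a : Fn),
      walsh p (comp p F (c : Fs)) a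
        = (ε : ℂ) * (p : ℂ) ^ (n / 2) * ep p (comp p Fstar ((σ c : Fsˣ) : Fs) a)) :
    (Nat.card {x : Fn // F x = 0} : ℚ)
        = (p : ℚ) ^ ((n : ℤ) - (s : ℤ))
          + (ε : ℚ) * ((p : ℚ) ^ (s : ℤ) - 1) * (p : ℚ) ^ (((n / 2 : ℕ) : ℤ) - (s : ℤ))
    ∧ ∀ i : Fs, i ≠ 0 →
      (Nat.card {x : Fn // F x = i} : ℚ)
        = (p : ℚ) ^ ((n : ℤ) - (s : ℤ))
          - (ε : ℚ) * (p : ℚ) ^ (((n / 2 : ℕ) : ℤ) - (s : ℤ)) :=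
  statement2_general p n s hp Fn Fs hcardn hcards F Fstar σ ε hF0 hFsym hdual

end
end

section
/- Let p be an odd prime and f : F_{p^n} → F_p a weakly regular bent function with sign ν_f ∈ {±1} and dual f^*, so that W_f(a) = ν_f (√p^*)^n ζ_p^{f^*(a)} for all a ∈ F_{p^n}. Then for every β ∈ F_p^* and every a ∈ F_{p^n}, Σ_{x ∈ F_{p^n}} ζ_p^{β f(x) − Tr^n_1(ax)} = ν_f η₁(β)^n (√p^*)^n ζ_p^{β f^*(β⁻¹ a)}; in particular, βf is a weakly regular bent function with sign ν_f η₁(β)^n and dual (βf)^*(a) = β f^*(β⁻¹ a). -/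
/-!
Applying the Galois automorphism `ζ_p ↦ ζ_p^β` of `ℚ(ζ_p)` to `W_f(β⁻¹a)` gives `W_{βf}(a)`.
To apply it to the right-hand side `ν (√p^*)^n ζ_p^{f^*(β⁻¹a)}`, write `(√p^*)^n = ±τ^n` with the
quadratic Gauss sum `τ` (both square to `p^*`); the relation then says that `ζ_p` is a root of a
polynomial with rational coefficients, and so is every `ζ_p^β` since the `p`-th cyclotomic polynomial
is irreducible over `ℚ`. Finally the automorphism sends `τ` to `η₁(β) τ`.
-/

open scoped BigOperators Pointwise

noncomputable section

/-- `√(p^*)`, where `p^* = (−1)^{(p−1)/2} p`. -/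
def sqrtPStar (p : ℕ) : ℂ :=
  if p % 4 = 1 then (Real.sqrt p : ℂ) else Complex.I * (Real.sqrt p : ℂ)

open Polynomial


def zeta (p : ℕ) : ℂ := Complex.exp (2 * Real.pi * Complex.I / p)

theorem isPrimitiveRoot_zeta (p : ℕ) [NeZero p] : IsPrimitiveRoot (zeta p) p :=
  Complex.isPrimitiveRoot_exp p (NeZero.ne p)

theorem ep_eq_zeta_pow (p : ℕ) (x : ZMod p) : ep p x = zeta p ^ x.val := by
  rw [ep, zeta, ← Complex.exp_nat_mul]
  ring_nf

theorem ep_mul (p : ℕ) [NeZero p] (u x : ZMod p) : ep p (u * x) = (zeta p ^ u.val) ^ x.val := by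
  have h := pow_mod_orderOf (zeta p) (u.val * x.val)
  rwa [← (isPrimitiveRoot_zeta p).eq_orderOf, ← ZMod.val_mul, pow_mul, ← ep_eq_zeta_pow] at h

def epChar (p : ℕ) [NeZero p] : AddChar (ZMod p) ℂ :=
  AddChar.zmodChar p (isPrimitiveRoot_zeta p).pow_eq_one

theorem epChar_apply (p : ℕ) [NeZero p] (x : ZMod p) : epChar p x = ep p x := by
  rw [epChar, AddChar.zmodChar_apply, ep_eq_zeta_pow]

theorem epChar_isPrimitive (p : ℕ) [NeZero p] : (epChar p).IsPrimitive :=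
  AddChar.zmodChar_primitive_of_primitive_root p (isPrimitiveRoot_zeta p)

theorem IsPrimitiveRoot.aeval_pow_eq_zero {K : Type*} [Field K] [CharZero K] {ζ : K} {m : ℕ}
    (hζ : IsPrimitiveRoot ζ m) (hm : 0 < m) {P : ℚ[X]} (hP : aeval ζ P = 0) {k : ℕ}
    (hk : k.Coprime m) : aeval (ζ ^ k) P = 0 := by
  have hdvd := minpoly.dvd ℚ ζ hP
  rw [← cyclotomic_eq_minpoly_rat hζ hm,
    cyclotomic_eq_minpoly_rat (hζ.pow_of_coprime k hk) hm] at hdvd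
  exact aeval_eq_zero_of_dvd_aeval_eq_zero hdvd (minpoly.aeval ℚ _)

def expPoly {ι : Type*} [Fintype ι] {p : ℕ} (w : ι → ℚ) (e : ι → ZMod p) : ℚ[X] :=
  ∑ i, C (w i) * X ^ (e i).val

theorem aeval_zeta_pow_expPoly {ι : Type*} [Fintype ι] {p : ℕ} [NeZero p] (w : ι → ℚ)
    (e : ι → ZMod p) (u : ZMod p) :
    aeval (zeta p ^ u.val) (expPoly w e) = ∑ i, (w i : ℂ) * ep p (u * e i) := by
  simp only [expPoly, map_sum, map_mul, aeval_C, map_pow, aeval_X, ep_mul, eq_ratCast]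

theorem Units.isSquare_val_iff {G₀ : Type*} [GroupWithZero G₀] (u : G₀ˣ) :
    IsSquare (u : G₀) ↔ IsSquare u := by
  refine ⟨fun ⟨r, hr⟩ => ?_, fun h => h.map (Units.coeHom G₀)⟩
  have hr0 : r ≠ 0 := by
    rintro rfl
    simp at hr
  exact ⟨Units.mk0 r hr0, Units.ext hr⟩

def complexQuadraticChar (F : Type*) [Field F] [Fintype F] [DecidableEq F] : MulChar F ℂ :=
  (quadraticChar F).ringHomComp (Int.castRingHom ℂ)

section QuadraticChar

variable {F : Type*} [Field F] [Fintype F] [DecidableEq F]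

theorem complexQuadraticChar_units (u : Fˣ) :
    complexQuadraticChar F u = if IsSquare u then 1 else -1 := by
  rw [complexQuadraticChar, MulChar.ringHomComp_apply]
  split_ifs with hu
  · rw [(quadraticChar_one_iff_isSquare u.ne_zero).mpr ((Units.isSquare_val_iff u).mpr hu)]
    simp
  · rw [quadraticChar_neg_one_iff_not_isSquare.mpr (mt (Units.isSquare_val_iff u).mp hu)]
    simp

theorem gaussSum_complexQuadraticChar_mulShift (ψ : AddChar F ℂ) (u : Fˣ) :
    gaussSum (complexQuadraticChar F) (ψ.mulShift u)
      = (if IsSquare u then 1 else -1) * gaussSum (complexQuadraticChar F) ψ := by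
  rw [← gaussSum_mulShift _ ψ u, complexQuadraticChar_units, ← mul_assoc]
  split_ifs <;> ring

end QuadraticChar

theorem sqrtPStar_sq {p : ℕ} (hp : Odd p) : sqrtPStar p ^ 2 = (ZMod.χ₄ p : ℂ) * p := by
  have hsq : (Real.sqrt p : ℂ) ^ 2 = p := by
    rw [← Complex.ofReal_pow, Real.sq_sqrt (Nat.cast_nonneg p), Complex.ofReal_natCast]
  rcases Nat.odd_mod_four_iff.mp (Nat.odd_iff.mp hp) with h | h
  · rw [sqrtPStar, if_pos h, ZMod.χ₄_nat_one_mod_four h]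
    simp [hsq]
  · rw [sqrtPStar, if_neg (by omega), ZMod.χ₄_nat_three_mod_four h]
    simp [mul_pow, hsq]

theorem gaussSum_complexQuadraticChar_sq (p : ℕ) [Fact p.Prime] (hp : Odd p) :
    gaussSum (complexQuadraticChar (ZMod p)) (epChar p) ^ 2 = sqrtPStar p ^ 2 := by
  have hchar : ringChar (ZMod p) ≠ 2 := by
    rw [ZMod.ringChar_zmod_n]
    rintro rfl
    exact Nat.not_odd_iff_even.mpr even_two hp
  have hne : complexQuadraticChar (ZMod p) ≠ 1 :=
    (MulChar.ringHomComp_ne_one_iff Int.cast_injective).mpr (quadraticChar_ne_one hchar)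
  have hquad : (complexQuadraticChar (ZMod p)).IsQuadratic :=
    (quadraticChar_isQuadratic _).comp _
  rw [gaussSum_sq hne hquad (epChar_isPrimitive p), sqrtPStar_sq hp, complexQuadraticChar,
    MulChar.ringHomComp_apply, quadraticChar_neg_one hchar, ZMod.card]
  simp

theorem exists_rat_mul_pow_eq_of_sq_eq {K : Type*} [Field K] {x y : K} (h : x ^ 2 = y ^ 2) (n : ℕ)
    {ν : K} (hν : ν = 1 ∨ ν = -1) : ∃ ε : ℚ, ε * x ^ n = ν * y ^ n := by
  have hsign : ((-1 : K) ^ n) * (-1) ^ n = 1 := by rw [← mul_pow]; norm_num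
  rcases sq_eq_sq_iff_eq_or_eq_neg.mp h with rfl | rfl <;> rcases hν with rfl | rfl
  · exact ⟨1, by simp⟩
  · exact ⟨-1, by simp⟩
  · exact ⟨(-1) ^ n, by push_cast; rw [neg_pow]; linear_combination y ^ n * hsign⟩
  · exact ⟨-(-1) ^ n, by push_cast; rw [neg_pow]; linear_combination -y ^ n * hsign⟩

theorem walsh_units_mul {p : ℕ} {V : Type*} [CommRing V] [Fintype V] [Algebra (ZMod p) V]
    (f : V → ZMod p) (β : (ZMod p)ˣ) (a : V) :
    walsh p (fun x => (β : ZMod p) * f x) a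
      = ∑ x, ep p (β * (f x - Algebra.trace (ZMod p) V
          ((((β⁻¹ : (ZMod p)ˣ) : ZMod p) • a) * x))) := by
  refine Finset.sum_congr rfl fun x _ => ?_
  rw [smul_mul_assoc, map_smul, smul_eq_mul, mul_sub, ← mul_assoc, ← Units.val_mul,
    mul_inv_cancel, Units.val_one, one_mul]

theorem statement15_general
    (p n : ℕ) [Fact p.Prime] (hp : Odd p)
    (Fn : Type) [Field Fn] [Fintype Fn] [Algebra (ZMod p) Fn]
    (f : Fn → ZMod p)
    (ν : ℂ) (hν : ν = 1 ∨ ν = -1) (fstar : Fn → ZMod p)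
    (hwr : ∀ a : Fn, walsh p f a = ν * (sqrtPStar p) ^ n * ep p (fstar a)) :
    ∀ (β : (ZMod p)ˣ) (a : Fn),
      walsh p (fun x => (β : ZMod p) * f x) a
        = ν * (if IsSquare β then 1 else (-1 : ℂ)) ^ n * (sqrtPStar p) ^ n
            * ep p ((β : ZMod p) * fstar (((β⁻¹ : (ZMod p)ˣ) : ZMod p) • a)) := by
  intro β a
  set b := ((β⁻¹ : (ZMod p)ˣ) : ZMod p) • a
  set χ := complexQuadraticChar (ZMod p)
  obtain ⟨ε, hε⟩ := exists_rat_mul_pow_eq_of_sq_eq (gaussSum_complexQuadraticChar_sq p hp) n hν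
  set P : ℚ[X] := expPoly (fun _ => 1) (fun x => f x - Algebra.trace (ZMod p) Fn (b * x))
    - C ε * expPoly (fun t => (quadraticChar (ZMod p) t : ℚ)) id ^ n * X ^ (fstar b).val
  have hP : ∀ u : (ZMod p)ˣ, aeval (zeta p ^ (u : ZMod p).val) P
      = ∑ x, ep p (u * (f x - Algebra.trace (ZMod p) Fn (b * x)))
        - ε * gaussSum χ ((epChar p).mulShift u) ^ n * ep p (u * fstar b) := by
    intro u
    simp [P, aeval_zeta_pow_expPoly, gaussSum, epChar_apply, ep_mul, χ, complexQuadraticChar]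
  have hP1 : aeval (zeta p) P = 0 := by
    have h := hP 1
    simp only [Units.val_one, ZMod.val_one, pow_one, one_mul, AddChar.mulShift_one] at h
    rw [h, ← walsh, hwr, ← hε]
    ring
  have hPβ := hP β
  rw [(isPrimitiveRoot_zeta p).aeval_pow_eq_zero (NeZero.pos p) hP1 (ZMod.val_coe_unit_coprime β),
    eq_comm, sub_eq_zero, gaussSum_complexQuadraticChar_mulShift] at hPβ
  rw [walsh_units_mul, hPβ]
  linear_combination (if IsSquare β then 1 else (-1 : ℂ)) ^ n * ep p (β * fstar b) * hε

/-- if `f : F_{p^n} → F_p` is weakly regular bent with sign `ν_f` and dual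
`f^*`, then for every `β ∈ F_p^*` the Walsh transform of `βf` satisfies
`W_{βf}(a) = ν_f η₁(β)^n (√p^*)^n ζ_p^{β f^*(β⁻¹a)}`; in particular `βf` is weakly regular
bent with sign `ν_f η₁(β)^n` and dual `(βf)^*(a) = β f^*(β⁻¹a)`. -/
theorem statement15
    (p n : ℕ) [Fact p.Prime] (hp : Odd p) (hn : 0 < n)
    (Fn : Type) [Field Fn] [Fintype Fn] [Algebra (ZMod p) Fn]
    (hcardn : Fintype.card Fn = p ^ n)
    (f : Fn → ZMod p)
    (ν : ℂ) (hν : ν = 1 ∨ ν = -1) (fstar : Fn → ZMod p)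
    (hwr : ∀ a : Fn, walsh p f a = ν * (sqrtPStar p) ^ n * ep p (fstar a)) :
    ∀ (β : (ZMod p)ˣ) (a : Fn),
      walsh p (fun x => (β : ZMod p) * f x) a
        = ν * (if IsSquare β then 1 else (-1 : ℂ)) ^ n * (sqrtPStar p) ^ n
            * ep p ((β : ZMod p) * fstar (((β⁻¹ : (ZMod p)ˣ) : ZMod p) • a)) :=
  statement15_general p n hp Fn f ν hν fstar hwr

end
end
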